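/- (Theorem 3.5(ii)) Let the sequences (xᵏ, yᵏ, uᵏ, θ_k) be generated by the FPSA iteration, let m, M > 0 satisfy m ≤ f(Kxᵏ) ≤ M for all k, and define ϖ(x,y,u) = φ(x,u)/(⟨Kx, y⟩ − f*(y)). Then lim_{k→∞} ϖ(xᵏ⁺¹, yᵏ⁺¹, uᵏ⁺¹) exists and equals θ̄ = lim_{k→∞} θ_k. -/

import Mathlib

open Filter Metric Set RealInnerProductSpace
open scoped Topology Classical

noncomputable section

/-- Convexity for extended-real-valued functions. -/
def ERealConvex {α : Type*} [AddCommGroup α] [Module ℝ α] (f : α → EReal) : Prop :=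
  ∀ x y : α, ∀ a b : ℝ, 0 ≤ a → 0 ≤ b → a + b = 1 →
    f (a • x + b • y) ≤ (a : EReal) * f x + (b : EReal) * f y

/-- A proper extended-real-valued function: never `⊥` and finite somewhere. -/
def ERealProper {α : Type*} (f : α → EReal) : Prop :=
  (∀ x, f x ≠ ⊥) ∧ ∃ x, f x ≠ ⊤

/-- Effective domain of an extended-real-valued function. -/
def edom {α : Type*} (f : α → EReal) : Set α := {x | f x ≠ ⊤}

/-- Convex (Fenchel) conjugate. -/
def econj {α : Type*} [NormedAddCommGroup α] [InnerProductSpace ℝ α]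
    (f : α → EReal) (y : α) : EReal :=
  ⨆ z, (((⟪z, y⟫ : ℝ) : EReal) - f z)

/-- Convex subdifferential. -/
def csubdiff {α : Type*} [NormedAddCommGroup α] [InnerProductSpace ℝ α]
    (f : α → EReal) (z : α) : Set α :=
  {v | ∀ w, f z + ((⟪v, w - z⟫ : ℝ) : EReal) ≤ f w}

/-- Normal cone of a convex set. -/
def normalCone {α : Type*} [NormedAddCommGroup α] [InnerProductSpace ℝ α]
    (S : Set α) (x : α) : Set α :=
  {v | ∀ z ∈ S, ⟪v, z - x⟫ ≤ 0}

/-- Calmness of an extended-real-valued function at a point of its domain. -/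
def ECalm {α : Type*} [NormedAddCommGroup α] (f : α → EReal) (y : α) : Prop :=
  f y ≠ ⊤ ∧ ∃ ϱ > (0:ℝ), ∃ ε > (0:ℝ), ∀ y' ∈ Metric.ball y ε,
    f y - ((ϱ * ‖y' - y‖ : ℝ) : EReal) ≤ f y' ∧ f y' ≤ f y + ((ϱ * ‖y' - y‖ : ℝ) : EReal)

/-- Fréchet subdifferential of an extended-real-valued function of one variable. -/
def fsub {α : Type*} [NormedAddCommGroup α] [InnerProductSpace ℝ α]
    (f : α → EReal) (x : α) : Set α :=
  {v | 0 ≤ Filter.liminf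
      (fun z => (f z - f x - ((⟪v, z - x⟫ : ℝ) : EReal)) * (((‖z - x‖)⁻¹ : ℝ) : EReal))
      (𝓝[≠] x)}

/-- Fréchet subdifferential of a function of two (inner-product-space) variables. -/
def fsub2 {α β : Type*} [NormedAddCommGroup α] [InnerProductSpace ℝ α]
    [NormedAddCommGroup β] [InnerProductSpace ℝ β]
    (Φ : α → β → EReal) (a : α) (b : β) : Set (α × β) :=
  {v | 0 ≤ Filter.liminf
      (fun w : α × β =>
        (Φ w.1 w.2 - Φ a b - ((⟪v.1, w.1 - a⟫ + ⟪v.2, w.2 - b⟫ : ℝ) : EReal)) *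
          (((‖w - (a, b)‖)⁻¹ : ℝ) : EReal))
      (𝓝[≠] (a, b))}

/-- Limiting (Mordukhovich) subdifferential of a function of two variables. -/
def lsub2 {α β : Type*} [NormedAddCommGroup α] [InnerProductSpace ℝ α]
    [NormedAddCommGroup β] [InnerProductSpace ℝ β]
    (Φ : α → β → EReal) (a : α) (b : β) : Set (α × β) :=
  {v | ∃ w : ℕ → α × β, ∃ vs : ℕ → α × β,
      Tendsto w atTop (𝓝 (a, b)) ∧
      Tendsto (fun k => Φ (w k).1 (w k).2) atTop (𝓝 (Φ a b)) ∧
      (∀ k, vs k ∈ fsub2 Φ (w k).1 (w k).2) ∧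
      Tendsto vs atTop (𝓝 v)}

/-- Fréchet subdifferential of a function of three variables. -/
def fsub3 {α β γ : Type*} [NormedAddCommGroup α] [InnerProductSpace ℝ α]
    [NormedAddCommGroup β] [InnerProductSpace ℝ β]
    [NormedAddCommGroup γ] [InnerProductSpace ℝ γ]
    (Φ : α → β → γ → EReal) (a : α) (b : β) (c : γ) : Set (α × β × γ) :=
  {v | 0 ≤ Filter.liminf
      (fun w : α × β × γ =>
        (Φ w.1 w.2.1 w.2.2 - Φ a b c -
          ((⟪v.1, w.1 - a⟫ + ⟪v.2.1, w.2.1 - b⟫ + ⟪v.2.2, w.2.2 - c⟫ : ℝ) : EReal)) *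
          (((‖w - (a, b, c)‖)⁻¹ : ℝ) : EReal))
      (𝓝[≠] (a, b, c))}

/-- Limiting (Mordukhovich) subdifferential of a function of three variables. -/
def lsub3 {α β γ : Type*} [NormedAddCommGroup α] [InnerProductSpace ℝ α]
    [NormedAddCommGroup β] [InnerProductSpace ℝ β]
    [NormedAddCommGroup γ] [InnerProductSpace ℝ γ]
    (Φ : α → β → γ → EReal) (a : α) (b : β) (c : γ) : Set (α × β × γ) :=
  {v | ∃ w : ℕ → α × β × γ, ∃ vs : ℕ → α × β × γ,
      Tendsto w atTop (𝓝 (a, b, c)) ∧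
      Tendsto (fun k => Φ (w k).1 (w k).2.1 (w k).2.2) atTop (𝓝 (Φ a b c)) ∧
      (∀ k, vs k ∈ fsub3 Φ (w k).1 (w k).2.1 (w k).2.2) ∧
      Tendsto vs atTop (𝓝 v)}

/-- A polyhedral set: a finite intersection of closed half-spaces. -/
def IsPolyhedral {α : Type*} [NormedAddCommGroup α] [InnerProductSpace ℝ α]
    (S : Set α) : Prop :=
  ∃ (m : ℕ) (a : Fin m → α) (b : Fin m → ℝ), S = {z | ∀ i, ⟪a i, z⟫ ≤ b i}

/-- The merit function φ(x,u) = g(x) + h(x) + ι_S(x) + (1/(2δ))‖x-u‖². -/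
def phiF {n : ℕ} (S : Set (EuclideanSpace ℝ (Fin n)))
    (g : EuclideanSpace ℝ (Fin n) → EReal) (h : EuclideanSpace ℝ (Fin n) → ℝ) (δ : ℝ)
    (x u : EuclideanSpace ℝ (Fin n)) : EReal :=
  g x + ((h x : ℝ) : EReal) + (if x ∈ S then (0 : EReal) else ⊤)
    + (((2 * δ)⁻¹ * ‖x - u‖ ^ 2 : ℝ) : EReal)

/-- ϑ(x,u) = φ(x,u)/f(Kx). -/
def varthetaF {n p : ℕ} (S : Set (EuclideanSpace ℝ (Fin n)))
    (g : EuclideanSpace ℝ (Fin n) → EReal) (h : EuclideanSpace ℝ (Fin n) → ℝ)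
    (f : EuclideanSpace ℝ (Fin p) → EReal)
    (K : EuclideanSpace ℝ (Fin n) →ₗ[ℝ] EuclideanSpace ℝ (Fin p)) (δ : ℝ)
    (x u : EuclideanSpace ℝ (Fin n)) : EReal :=
  phiF S g h δ x u / f (K x)

/-- ϖ(x,y,u) = φ(x,u)/(⟨Kx,y⟩ - f*(y)). -/
def varpiF {n p : ℕ} (S : Set (EuclideanSpace ℝ (Fin n)))
    (g : EuclideanSpace ℝ (Fin n) → EReal) (h : EuclideanSpace ℝ (Fin n) → ℝ)
    (f : EuclideanSpace ℝ (Fin p) → EReal)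
    (K : EuclideanSpace ℝ (Fin n) →ₗ[ℝ] EuclideanSpace ℝ (Fin p)) (δ : ℝ)
    (x : EuclideanSpace ℝ (Fin n)) (y : EuclideanSpace ℝ (Fin p))
    (u : EuclideanSpace ℝ (Fin n)) : EReal :=
  phiF S g h δ x u / (((⟪K x, y⟫ : ℝ) : EReal) - econj f y)

/-
FPSA step k is a proximal-gradient step on `g + ι_S + (1/(2δ))‖· - uᵏ‖²` for the linearisation
of `h - θ_k f∘K` at `xᵏ`. The three-point inequality of the proximal step, the descent lemma for
`h`, the subgradient inequality for `f` and the averaging `uᵏ⁺¹ = (1-σ)uᵏ + σxᵏ⁺¹` combine into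
the sufficient decrease `(1/(2δ) - L/2)‖xᵏ⁺¹ - xᵏ‖² ≤ (θ_k - θ_{k+1}) f(Kxᵏ⁺¹)`, so the steps
vanish. By the Fenchel–Young equality for `yᵏ⁺¹ ∈ ∂f(Kxᵏ)`, the denominator of
`ϖ(xᵏ⁺¹, yᵏ⁺¹, uᵏ⁺¹)` is `f(Kxᵏ) + ⟨yᵏ⁺¹, K(xᵏ⁺¹ - xᵏ)⟩` while its numerator is
`θ_{k+1} f(Kxᵏ⁺¹)`. Subgradients of `f` are bounded on the compact `K(S) ⊆ int dom f`, so the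
denominator differs from `f(Kxᵏ⁺¹) ≥ m > 0` by `O(‖xᵏ⁺¹ - xᵏ‖)`, and the ratio tends to `θ̄`.
-/

lemma EReal.toReal_add_le_toReal_add {a b : EReal} {r s : ℝ} (ha : a ≠ ⊤) (ha' : a ≠ ⊥)
    (hb : b ≠ ⊤) (hb' : b ≠ ⊥) (h : a + r ≤ b + s) : a.toReal + r ≤ b.toReal + s := by
  lift a to ℝ using ⟨ha, ha'⟩
  lift b to ℝ using ⟨hb, hb'⟩
  exact_mod_cast h

section Convex

variable {E : Type*} [NormedAddCommGroup E] [InnerProductSpace ℝ E] {f : E → EReal}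

lemma ERealConvex.convexOn_toReal (hf : ERealConvex f) (hbot : ∀ z, f z ≠ ⊥) :
    ConvexOn ℝ (edom f) (fun z => (f z).toReal) := by
  have hcomb : ∀ {x y : E}, x ∈ edom f → y ∈ edom f → ∀ a b : ℝ,
      (a : EReal) * f x + (b : EReal) * f y = (↑(a * (f x).toReal + b * (f y).toReal) : EReal) := by
    intro x y hx hy a b
    lift f x to ℝ using ⟨hx, hbot x⟩ with r
    lift f y to ℝ using ⟨hy, hbot y⟩ with s
    simp only [EReal.toReal_coe]; norm_cast
  refine ⟨fun x hx y hy a b ha hb hab => ?_, fun x hx y hy a b ha hb hab => ?_⟩ <;>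
    have h := hf x y a b ha hb hab <;> rw [hcomb hx hy] at h
  · exact ne_top_of_le_ne_top (EReal.coe_ne_top _) h
  · have h' := EReal.toReal_le_toReal h (hbot _) (EReal.coe_ne_top _)
    rwa [EReal.toReal_coe] at h'

lemma csubdiff_toReal_add_inner_le {z w y : E} (hy : y ∈ csubdiff f z) (hz : f z ≠ ⊤)
    (hz' : f z ≠ ⊥) (hw : f w ≠ ⊤) (hw' : f w ≠ ⊥) :
    (f z).toReal + ⟪y, w - z⟫ ≤ (f w).toReal := by
  simpa using EReal.toReal_add_le_toReal_add (s := 0) hz hz' hw hw' (by simpa using hy w)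

lemma econj_eq_of_mem_csubdiff {z y : E} (hy : y ∈ csubdiff f z) (hz : f z ≠ ⊤)
    (hz' : f z ≠ ⊥) : econj f y = ((⟪z, y⟫ - (f z).toReal : ℝ) : EReal) := by
  have hfz : f z = ((f z).toReal : EReal) := (EReal.coe_toReal hz hz').symm
  refine le_antisymm (iSup_le fun w => ?_) ?_
  · have hw := hy w
    induction hfw : f w using EReal.rec with
    | bot => rw [hfw, hfz, ← EReal.coe_add] at hw; exact absurd hw (by simp)
    | top => simp
    | coe t =>
      rw [hfw, hfz, ← EReal.coe_add, EReal.coe_le_coe_iff, inner_sub_right,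
        real_inner_comm w, real_inner_comm z] at hw
      rw [← EReal.coe_sub, EReal.coe_le_coe_iff]
      linarith
  · rw [EReal.coe_sub, ← hfz]
    exact le_iSup (fun w => ((⟪w, y⟫ : ℝ) : EReal) - f w) z

lemma mul_norm_le_of_mem_csubdiff {z y : E} {ε B : ℝ} (hε : 0 < ε) (hy : y ∈ csubdiff f z)
    (hbot : ∀ w, f w ≠ ⊥) (hfin : ∀ w ∈ closedBall z ε, f w ≠ ⊤)
    (hB : ∀ w ∈ closedBall z ε, |(f w).toReal| ≤ B) : ε * ‖y‖ ≤ 2 * B := by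
  rcases eq_or_ne y 0 with rfl | hy0
  · simpa using le_trans (abs_nonneg _) (hB z (mem_closedBall_self hε.le))
  set w := z + (ε * ‖y‖⁻¹) • y
  have hw : w ∈ closedBall z ε := by
    simp [w, norm_smul, abs_of_pos hε, norm_ne_zero_iff.2 hy0]
  have hinner : ⟪y, w - z⟫ = ε * ‖y‖ := by
    simp only [w, add_sub_cancel_left, real_inner_smul_right, real_inner_self_eq_norm_sq]
    field_simp [norm_ne_zero_iff.2 hy0]
  have hz := mem_closedBall_self (x := z) hε.le
  have hsub := csubdiff_toReal_add_inner_le hy (hfin z hz) (hbot z) (hfin w hw) (hbot w)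
  linarith [abs_le.1 (hB z hz), abs_le.1 (hB w hw)]

lemma tendsto_subgradient_gap {z y : ℕ → E} {R : ℝ} (hy : ∀ k, y (k + 1) ∈ csubdiff f (z k))
    (hfin : ∀ k, f (z k) ≠ ⊤) (hbot : ∀ k, f (z k) ≠ ⊥) (hR : ∀ k, ‖y (k + 1)‖ ≤ R)
    (hz : Tendsto (fun k => z (k + 1) - z k) atTop (𝓝 0)) :
    Tendsto (fun k => (f (z (k + 1))).toReal - ((f (z k)).toReal + ⟪y (k + 1), z (k + 1) - z k⟫))
      atTop (𝓝 0) := by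
  have hbound : Tendsto (fun k => 2 * R * ‖z (k + 1) - z k‖) atTop (𝓝 0) := by
    simpa using (tendsto_zero_iff_norm_tendsto_zero.1 hz).const_mul (2 * R)
  refine squeeze_zero (fun k => ?_) (fun k => ?_) hbound
  · linarith [csubdiff_toReal_add_inner_le (hy k) (hfin k) (hbot k) (hfin (k + 1)) (hbot (k + 1))]
  · have hback := csubdiff_toReal_add_inner_le (hy (k + 1)) (hfin (k + 1)) (hbot (k + 1))
      (hfin k) (hbot k)
    have hcs := real_inner_le_norm (y (k + 2) - y (k + 1)) (z (k + 1) - z k)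
    have hy2 : ‖y (k + 2) - y (k + 1)‖ ≤ 2 * R := by
      linarith [norm_sub_le (y (k + 2)) (y (k + 1)), hR k, hR (k + 1)]
    rw [← neg_sub (z (k + 1)), inner_neg_right] at hback
    rw [inner_sub_left] at hcs
    nlinarith [norm_nonneg (z (k + 1) - z k)]

variable [FiniteDimensional ℝ E]

lemma exists_norm_le_of_mem_csubdiff (hf : ERealConvex f) (hbot : ∀ z, f z ≠ ⊥) {C : Set E}
    (hC : IsCompact C) (hCint : C ⊆ interior (edom f)) :
    ∃ R, ∀ z ∈ C, ∀ y ∈ csubdiff f z, ‖y‖ ≤ R := by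
  obtain ⟨ε, hε, hsub⟩ := hC.exists_cthickening_subset_open isOpen_interior hCint
  have hcont : ContinuousOn (fun z => (f z).toReal) (cthickening ε C) :=
    ((hf.convexOn_toReal hbot).continuousOn_interior).mono hsub
  obtain ⟨B, hB⟩ := hC.cthickening.exists_bound_of_continuousOn hcont
  refine ⟨2 * B / ε, fun z hz y hy => (le_div_iff₀ hε).2 ?_⟩
  have hball := closedBall_subset_cthickening hz ε
  rw [mul_comm]
  exact mul_norm_le_of_mem_csubdiff hε hy hbot
    (fun w hw => interior_subset (hsub (hball hw))) (fun w hw => hB w (hball hw))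

end Convex

lemma le_add_inner_add_of_hasGradientAt_segment {E : Type*} [NormedAddCommGroup E]
    [InnerProductSpace ℝ E] [CompleteSpace E] {h : E → ℝ} {gh : E → E} {L : ℝ} {a b : E}
    (hgrad : ∀ z ∈ segment ℝ a b, HasGradientAt h (gh z) z)
    (hLip : ∀ z ∈ segment ℝ a b, ‖gh z - gh a‖ ≤ L * ‖z - a‖) :
    h b ≤ h a + ⟪gh a, b - a⟫ + L / 2 * ‖b - a‖ ^ 2 := by
  set d := b - a
  have hmem : ∀ t ∈ Icc (0 : ℝ) 1, a + t • d ∈ segment ℝ a b := fun t ht => by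
    rw [segment_eq_image']; exact ⟨t, ht, rfl⟩
  let φ : ℝ → ℝ := fun t => h (a + t • d) - t * ⟪gh a, d⟫ - L / 2 * t ^ 2 * ‖d‖ ^ 2
  have hderiv : ∀ t ∈ Icc (0 : ℝ) 1,
      HasDerivAt φ (⟪gh (a + t • d), d⟫ - ⟪gh a, d⟫ - L * t * ‖d‖ ^ 2) t := by
    intro t ht
    have hline : HasDerivAt (fun s : ℝ => a + s • d) d t := by
      simpa using ((hasDerivAt_id t).smul_const d).const_add a
    have := ((hgrad _ (hmem t ht)).hasFDerivAt.comp_hasDerivAt t hline).sub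
      ((hasDerivAt_id t).mul_const ⟪gh a, d⟫) |>.sub
      (((hasDerivAt_pow 2 t).const_mul (L / 2)).mul_const (‖d‖ ^ 2))
    refine this.congr_deriv ?_
    simp only [InnerProductSpace.toDual_apply_apply]
    ring
  have hanti : AntitoneOn φ (Icc 0 1) := by
    refine antitoneOn_of_hasDerivWithinAt_nonpos (convex_Icc 0 1)
      (fun t ht => (hderiv t ht).continuousAt.continuousWithinAt)
      (fun t ht => (hderiv t (interior_subset ht)).hasDerivWithinAt) fun t ht => ?_
    have ht := interior_subset ht
    have hdist := hLip _ (hmem t ht)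
    rw [add_sub_cancel_left, norm_smul, Real.norm_of_nonneg ht.1] at hdist
    have hcs := real_inner_le_norm (gh (a + t • d) - gh a) d
    rw [inner_sub_left] at hcs
    nlinarith [norm_nonneg d, mul_le_mul_of_nonneg_right hdist (norm_nonneg d)]
  have hends := hanti (left_mem_Icc.2 zero_le_one) (right_mem_Icc.2 zero_le_one) zero_le_one
  simp only [φ, one_smul, zero_smul, add_zero, add_sub_cancel, d] at hends
  linarith

lemma ConvexOn.add_mul_norm_sq_le_of_isMinOn {E : Type*} [NormedAddCommGroup E]
    [InnerProductSpace ℝ E] {C : Set E} {G : E → ℝ} (hG : ConvexOn ℝ C G) {c : ℝ} {v xp w : E}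
    (hmin : IsMinOn (fun z => G z + c * ‖z - v‖ ^ 2) C xp) (hxp : xp ∈ C) (hw : w ∈ C) :
    G xp + c * ‖xp - v‖ ^ 2 + c * ‖w - xp‖ ^ 2 ≤ G w + c * ‖w - v‖ ^ 2 := by
  set d := w - xp
  have hexpand : ∀ t : ℝ, ‖xp + t • d - v‖ ^ 2
      = ‖xp - v‖ ^ 2 + t * (2 * ⟪xp - v, d⟫) + t ^ 2 * ‖d‖ ^ 2 := fun t => by
    rw [add_sub_right_comm, norm_add_sq_real, real_inner_smul_right, norm_smul,
      Real.norm_eq_abs, mul_pow, sq_abs]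
    ring
  -- first-order optimality along the segment from `xp` towards `w`
  have hslope : 0 ≤ G w - G xp + c * (2 * ⟪xp - v, d⟫) := by
    have hsmall : ∀ t ∈ Ioc (0 : ℝ) 1,
        0 ≤ G w - G xp + c * (2 * ⟪xp - v, d⟫) + t * (c * ‖d‖ ^ 2) := by
      rintro t ⟨ht0, ht1⟩
      have hzt : xp + t • d = (1 - t) • xp + t • w := by
        simp only [d, smul_sub, sub_smul, one_smul]; abel
      have h1t : 0 ≤ 1 - t := by linarith
      have hmem : xp + t • d ∈ C := hzt ▸ hG.1 hxp hw h1t ht0.le (sub_add_cancel 1 t)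
      have hconv := hG.2 hxp hw h1t ht0.le (sub_add_cancel 1 t)
      rw [← hzt, smul_eq_mul, smul_eq_mul] at hconv
      have hm : G xp + c * ‖xp - v‖ ^ 2 ≤ G (xp + t • d) + c * ‖xp + t • d - v‖ ^ 2 :=
        hmin hmem
      rw [hexpand] at hm
      nlinarith
    have hlim : Tendsto (fun t => G w - G xp + c * (2 * ⟪xp - v, d⟫) + t * (c * ‖d‖ ^ 2))
        (𝓝[>] 0) (𝓝 (G w - G xp + c * (2 * ⟪xp - v, d⟫))) :=
      tendsto_nhdsWithin_of_tendsto_nhds <| by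
        simpa using tendsto_const_nhds.add ((tendsto_id (x := 𝓝 (0 : ℝ))).mul_const (c * ‖d‖ ^ 2))
    exact ge_of_tendsto hlim (eventually_of_mem (Ioc_mem_nhdsGT zero_lt_one) hsmall)
  have hwv := hexpand 1
  rw [one_smul, add_sub_cancel] at hwv
  rw [hwv]
  linarith

lemma prox_gradient_step_decrease {E : Type*} [NormedAddCommGroup E] [InnerProductSpace ℝ E]
    {C : Set E} {G h : E → ℝ} (hG : ConvexOn ℝ C G) {gh : E → E} {δ L σ θ F F' : ℝ}
    {x x' u s : E} (hδ : 0 < δ) (hσ : 0 < σ) (hσ2 : σ < 2) (hθ : 0 ≤ θ) (hx : x ∈ C)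
    (hx' : x' ∈ C)
    (hmin : IsMinOn (fun z => G z + (2 * δ)⁻¹ * ‖z - u + δ • gh x - (θ * δ) • s‖ ^ 2) C x')
    (hdesc : h x' ≤ h x + ⟪gh x, x' - x⟫ + L / 2 * ‖x' - x‖ ^ 2)
    (hsub : ⟪s, x' - x⟫ ≤ F' - F) :
    G x' + h x' + (2 * δ)⁻¹ * ‖x' - ((1 - σ) • u + σ • x')‖ ^ 2
        + ((2 * δ)⁻¹ - L / 2) * ‖x' - x‖ ^ 2
      ≤ G x + h x + (2 * δ)⁻¹ * ‖x - u‖ ^ 2 + θ * (F' - F) := by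
  set c := (2 * δ)⁻¹
  set e := δ • gh x - (θ * δ) • s
  have hshift : ∀ z, z - u + δ • gh x - (θ * δ) • s = z - (u - e) := fun z => by
    simp only [e]; abel
  simp only [hshift] at hmin
  have hprox := hG.add_mul_norm_sq_le_of_isMinOn hmin hx' hx
  have hexpand : ∀ z, ‖z - (u - e)‖ ^ 2 = ‖z - u‖ ^ 2 + 2 * ⟪z - u, e⟫ + ‖e‖ ^ 2 := fun z => by
    rw [sub_sub_eq_add_sub, add_sub_right_comm, norm_add_sq_real]
  rw [hexpand, hexpand, norm_sub_rev x x'] at hprox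
  have hcross : c * (2 * ⟪x' - u, e⟫) - c * (2 * ⟪x - u, e⟫)
      = ⟪gh x, x' - x⟫ - θ * ⟪s, x' - x⟫ := by
    rw [← mul_sub, ← mul_sub, ← inner_sub_left, sub_sub_sub_cancel_right]
    have hc : c * (2 * δ) = 1 := inv_mul_cancel₀ (by positivity)
    simp only [e, inner_sub_right, real_inner_smul_right, real_inner_comm (x' - x)]
    linear_combination (⟪x' - x, gh x⟫ - θ * ⟪x' - x, s⟫) * hc
  have hmomentum : ‖x' - ((1 - σ) • u + σ • x')‖ ^ 2 ≤ ‖x' - u‖ ^ 2 := by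
    have : x' - ((1 - σ) • u + σ • x') = (1 - σ) • (x' - u) := by
      simp only [smul_sub, sub_smul, one_smul]; abel
    rw [this, norm_smul, mul_pow, Real.norm_eq_abs, sq_abs]
    exact mul_le_of_le_one_left (sq_nonneg _) (by nlinarith)
  have hc : 0 ≤ c := by positivity
  nlinarith [mul_le_mul_of_nonneg_left hmomentum hc, mul_le_mul_of_nonneg_left hsub hθ]

lemma inv_two_mul_sub_half_pos {δ L : ℝ} (hδ : 0 < δ) (hδL : δ < 1 / L) :
    0 < (2 * δ)⁻¹ - L / 2 := by
  have hδL' : δ * L < 1 := by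
    rcases le_or_gt L 0 with hL | hL
    · nlinarith
    · rwa [lt_div_iff₀ hL] at hδL
  have : (2 * δ)⁻¹ - L / 2 = (1 - δ * L) / (2 * δ) := by field_simp
  rw [this]
  exact div_pos (by linarith) (by positivity)

lemma tendsto_zero_of_mul_norm_sq_le {E : Type*} [NormedAddCommGroup E] {d : ℕ → E}
    {θ F : ℕ → ℝ} {c M θbar : ℝ} (hc : 0 < c) (hF0 : ∀ k, 0 ≤ F k) (hFM : ∀ k, F k ≤ M)
    (hθ : Tendsto θ atTop (𝓝 θbar)) (hd : ∀ k, c * ‖d k‖ ^ 2 ≤ (θ k - θ (k + 1)) * F (k + 1)) :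
    Tendsto d atTop (𝓝 0) := by
  have hθ' : Tendsto (fun k => |θ k - θ (k + 1)| * M / c) atTop (𝓝 0) := by
    simpa using (((hθ.sub (hθ.comp (tendsto_add_atTop_nat 1))).abs.mul_const M).div_const c)
  have hsq : Tendsto (fun k => ‖d k‖ ^ 2) atTop (𝓝 0) := by
    refine squeeze_zero (fun k => sq_nonneg _) (fun k => ?_) hθ'
    rw [le_div_iff₀ hc, mul_comm]
    calc c * ‖d k‖ ^ 2 ≤ (θ k - θ (k + 1)) * F (k + 1) := hd k
      _ ≤ |θ k - θ (k + 1)| * F (k + 1) := mul_le_mul_of_nonneg_right (le_abs_self _) (hF0 _)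
      _ ≤ |θ k - θ (k + 1)| * M := mul_le_mul_of_nonneg_left (hFM _) (abs_nonneg _)
  rw [tendsto_zero_iff_norm_tendsto_zero]
  simpa [Real.sqrt_sq (norm_nonneg _)] using hsq.sqrt

lemma tendsto_mul_div_of_sub_tendsto_zero {a F D : ℕ → ℝ} {m l : ℝ} (hm : 0 < m)
    (hF : ∀ k, m ≤ F k) (ha : Tendsto a atTop (𝓝 l))
    (hFD : Tendsto (fun k => F k - D k) atTop (𝓝 0)) :
    Tendsto (fun k => a k * F k / D k) atTop (𝓝 l) := by
  have hrel : Tendsto (fun k => (F k - D k) / F k) atTop (𝓝 0) := by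
    refine squeeze_zero_norm (fun k => ?_) (hFD.norm.div_const m |>.trans (by simp))
    rw [norm_div, Real.norm_of_nonneg (hm.le.trans (hF k))]
    exact div_le_div_of_nonneg_left (norm_nonneg _) hm (hF k)
  have hDF : Tendsto (fun k => D k / F k) atTop (𝓝 1) := by
    have h1 := (tendsto_const_nhds (x := (1 : ℝ))).sub hrel
    rw [sub_zero] at h1
    refine h1.congr fun k => ?_
    field_simp [(hm.trans_le (hF k)).ne']
    ring
  have hFD' : Tendsto (fun k => F k / D k) atTop (𝓝 1) := by
    simpa using hDF.inv₀ one_ne_zero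
  simpa [mul_div_assoc] using ha.mul hFD'

section Merit

variable {n p : ℕ} {S : Set (EuclideanSpace ℝ (Fin n))} {g : EuclideanSpace ℝ (Fin n) → EReal}
  {h : EuclideanSpace ℝ (Fin n) → ℝ} {f : EuclideanSpace ℝ (Fin p) → EReal}
  {K : EuclideanSpace ℝ (Fin n) →ₗ[ℝ] EuclideanSpace ℝ (Fin p)} {δ : ℝ}

lemma phiF_of_mem {x u : EuclideanSpace ℝ (Fin n)} (hx : x ∈ S) (hg : g x ≠ ⊤) (hg' : g x ≠ ⊥) :
    phiF S g h δ x u = (((g x).toReal + h x + (2 * δ)⁻¹ * ‖x - u‖ ^ 2 : ℝ) : EReal) := by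
  lift g x to ℝ using ⟨hg, hg'⟩ with r hr
  simp only [phiF, ← hr, if_pos hx, add_zero, EReal.toReal_coe]
  norm_cast

lemma mul_toReal_eq_of_coe_eq_varthetaF {θ : ℝ} {x u : EuclideanSpace ℝ (Fin n)} (hx : x ∈ S)
    (hg : g x ≠ ⊤) (hg' : g x ≠ ⊥) (hf : f (K x) ≠ ⊤) (hf' : f (K x) ≠ ⊥)
    (hf0 : (f (K x)).toReal ≠ 0) (hθ : (θ : EReal) = varthetaF S g h f K δ x u) :
    θ * (f (K x)).toReal = (g x).toReal + h x + (2 * δ)⁻¹ * ‖x - u‖ ^ 2 := by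
  rw [varthetaF, phiF_of_mem hx hg hg', ← EReal.coe_toReal hf hf', ← EReal.coe_div,
    EReal.coe_eq_coe_iff] at hθ
  rw [hθ, div_mul_cancel₀ _ hf0]

lemma varpiF_eq_of_mem_csubdiff {θ' : ℝ} {x x' u' : EuclideanSpace ℝ (Fin n)}
    {y : EuclideanSpace ℝ (Fin p)} (hx' : x' ∈ S) (hg : g x' ≠ ⊤) (hg' : g x' ≠ ⊥)
    (hy : y ∈ csubdiff f (K x)) (hf : f (K x) ≠ ⊤) (hf' : f (K x) ≠ ⊥)
    (hθ' : θ' * (f (K x')).toReal = (g x').toReal + h x' + (2 * δ)⁻¹ * ‖x' - u'‖ ^ 2) :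
    varpiF S g h f K δ x' y u'
      = ((θ' * (f (K x')).toReal / ((f (K x)).toReal + ⟪y, K x' - K x⟫) : ℝ) : EReal) := by
  rw [varpiF, phiF_of_mem hx' hg hg', ← hθ', econj_eq_of_mem_csubdiff hy hf hf',
    ← EReal.coe_sub, ← EReal.coe_div, inner_sub_right, real_inner_comm (K x'),
    real_inner_comm (K x)]
  congr 2
  ring

end Merit

lemma fpsa_sufficient_decrease {E P : Type*} [NormedAddCommGroup E] [InnerProductSpace ℝ E]
    [FiniteDimensional ℝ E] [NormedAddCommGroup P] [InnerProductSpace ℝ P]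
    [FiniteDimensional ℝ P] {S O : Set E} {g : E → EReal} {h : E → ℝ} {gh : E → E}
    {f : P → EReal} {K : E →ₗ[ℝ] P} {L δ σ θ θ' : ℝ} {x x' u : E} {y : P}
    (hSconv : Convex ℝ S) (hgconv : ERealConvex g) (hgbot : ∀ z, g z ≠ ⊥)
    (hfbot : ∀ z, f z ≠ ⊥) (hSO : S ⊆ O) (hgrad : ∀ z ∈ O, HasGradientAt h (gh z) z)
    (hLip : ∀ z ∈ O, ∀ w ∈ O, ‖gh z - gh w‖ ≤ L * ‖z - w‖)
    (hδ : 0 < δ) (hσ : 0 < σ) (hσ2 : σ < 2) (hθ : 0 ≤ θ)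
    (hx : x ∈ S ∧ g x ≠ ⊤) (hx' : x' ∈ S ∧ g x' ≠ ⊤) (hfx : f (K x) ≠ ⊤) (hfx' : f (K x') ≠ ⊤)
    (hy : y ∈ csubdiff f (K x))
    (hmin : ∀ w ∈ S,
      g x' + (((2 * δ)⁻¹ * ‖x' - u + δ • gh x - (θ * δ) • LinearMap.adjoint K y‖ ^ 2 : ℝ) : EReal)
        ≤ g w + (((2 * δ)⁻¹ * ‖w - u + δ • gh x - (θ * δ) • LinearMap.adjoint K y‖ ^ 2 : ℝ) : EReal))
    (hθx : θ * (f (K x)).toReal = (g x).toReal + h x + (2 * δ)⁻¹ * ‖x - u‖ ^ 2)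
    (hθx' : θ' * (f (K x')).toReal
      = (g x').toReal + h x' + (2 * δ)⁻¹ * ‖x' - ((1 - σ) • u + σ • x')‖ ^ 2) :
    ((2 * δ)⁻¹ - L / 2) * ‖x' - x‖ ^ 2 ≤ (θ - θ') * (f (K x')).toReal := by
  have hseg := hSconv.segment_subset hx.1 hx'.1
  have hdesc := le_add_inner_add_of_hasGradientAt_segment (fun z hz => hgrad z (hSO (hseg hz)))
    (fun z hz => hLip z (hSO (hseg hz)) x (hSO hx.1))
  have hsub : ⟪LinearMap.adjoint K y, x' - x⟫ ≤ (f (K x')).toReal - (f (K x)).toReal := by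
    have hsubgrad := csubdiff_toReal_add_inner_le hy hfx (hfbot _) hfx' (hfbot _)
    rw [LinearMap.adjoint_inner_left, map_sub]
    linarith
  have hG : ConvexOn ℝ (S ∩ edom g) (fun z => (g z).toReal) :=
    (hgconv.convexOn_toReal hgbot).subset inter_subset_right
      (hSconv.inter (hgconv.convexOn_toReal hgbot).1)
  have hstep := prox_gradient_step_decrease hG hδ hσ hσ2 hθ hx hx'
    (fun w hw => EReal.toReal_add_le_toReal_add hx'.2 (hgbot _) hw.2 (hgbot _) (hmin w hw.1))
    hdesc hsub
  linarith

theorem stmt12_general {n p : ℕ}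
    (S : Set (EuclideanSpace ℝ (Fin n)))
    (g : EuclideanSpace ℝ (Fin n) → EReal)
    (h : EuclideanSpace ℝ (Fin n) → ℝ)
    (gh : EuclideanSpace ℝ (Fin n) → EuclideanSpace ℝ (Fin n))
    (f : EuclideanSpace ℝ (Fin p) → EReal)
    (K : EuclideanSpace ℝ (Fin n) →ₗ[ℝ] EuclideanSpace ℝ (Fin p))
    (L δ : ℝ)
    (hSconv : Convex ℝ S) (hScomp : IsCompact S)
    (hgP : ERealProper g) (hgconv : ERealConvex g)
    (hfP : ERealProper f) (hfconv : ERealConvex f)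
    (hhC1 : ∃ O : Set (EuclideanSpace ℝ (Fin n)), IsOpen O ∧ S ⊆ O ∧
      (∀ z ∈ O, HasGradientAt h (gh z) z) ∧
      (∀ z ∈ O, ∀ w ∈ O, ‖gh z - gh w‖ ≤ L * ‖z - w‖))
    (hKS : ∀ z ∈ S, K z ∈ interior (edom f))
    (hδ : 0 < δ) (hδL : δ < 1 / L)
    (σ : ℝ) (hσ : 0 < σ) (hσ2 : σ < 2)
    (x u : ℕ → EuclideanSpace ℝ (Fin n)) (y : ℕ → EuclideanSpace ℝ (Fin p)) (θ : ℕ → ℝ)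
    (hxS : ∀ k, x k ∈ S ∧ g (x k) ≠ ⊤)
    (hy : ∀ k, y (k+1) ∈ csubdiff f (K (x k)))
    (hxmin : ∀ k, ∀ w ∈ S,
      g (x (k+1)) + (((2*δ)⁻¹ * ‖x (k+1) - u k + δ • gh (x k)
          - (θ k * δ) • (LinearMap.adjoint K) (y (k+1))‖ ^ 2 : ℝ) : EReal)
        ≤ g w + (((2*δ)⁻¹ * ‖w - u k + δ • gh (x k)
          - (θ k * δ) • (LinearMap.adjoint K) (y (k+1))‖ ^ 2 : ℝ) : EReal))
    (hu : ∀ k, u (k+1) = (1 - σ) • u k + σ • x (k+1))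
    (hθ : ∀ k, (θ k : EReal) = varthetaF S g h f K δ (x k) (u k))
    (hθnn : ∀ k, 0 ≤ θ k)
    (m M : ℝ) (hm : 0 < m)
    (hmM : ∀ k, (m : EReal) ≤ f (K (x k)) ∧ f (K (x k)) ≤ (M : EReal))
    (θbar : ℝ) (hθlim : Tendsto θ atTop (𝓝 θbar))
    :
    Tendsto (fun k => varpiF S g h f K δ (x (k+1)) (y (k+1)) (u (k+1))) atTop
      (𝓝 ((θbar : ℝ) : EReal)) := by
  obtain ⟨O, -, hSO, hgrad, hLip⟩ := hhC1
  have hfin : ∀ k, f (K (x k)) ≠ ⊤ := fun k => ne_top_of_le_ne_top (EReal.coe_ne_top M) (hmM k).2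
  have hfK : ∀ k, f (K (x k)) = (f (K (x k))).toReal := fun k =>
    (EReal.coe_toReal (hfin k) (hfP.1 _)).symm
  have hFm : ∀ k, m ≤ (f (K (x k))).toReal := fun k =>
    EReal.coe_le_coe_iff.1 (hfK k ▸ (hmM k).1)
  have hFM : ∀ k, (f (K (x k))).toReal ≤ M := fun k => EReal.coe_le_coe_iff.1 (hfK k ▸ (hmM k).2)
  have hθF : ∀ k, θ k * (f (K (x k))).toReal
      = (g (x k)).toReal + h (x k) + (2 * δ)⁻¹ * ‖x k - u k‖ ^ 2 := fun k =>
    mul_toReal_eq_of_coe_eq_varthetaF (hxS k).1 (hxS k).2 (hgP.1 _) (hfin k) (hfP.1 _)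
      (hm.trans_le (hFm k)).ne' (hθ k)
  have hΔ : Tendsto (fun k => x (k + 1) - x k) atTop (𝓝 0) :=
    tendsto_zero_of_mul_norm_sq_le (inv_two_mul_sub_half_pos hδ hδL)
      (fun k => hm.le.trans (hFm k)) hFM hθlim fun k =>
        fpsa_sufficient_decrease hSconv hgconv hgP.1 hfP.1 hSO hgrad hLip hδ hσ hσ2 (hθnn k)
          (hxS k) (hxS (k + 1)) (hfin k) (hfin (k + 1)) (hy k) (hxmin k) (hθF k)
          (hu k ▸ hθF (k + 1))
  obtain ⟨R, hR⟩ := exists_norm_le_of_mem_csubdiff hfconv hfP.1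
    (hScomp.image K.continuous_of_finiteDimensional) (image_subset_iff.2 hKS)
  have hgap := tendsto_subgradient_gap hy hfin (fun k => hfP.1 _)
    (fun k => hR _ ⟨x k, (hxS k).1, rfl⟩ _ (hy k))
    (by simpa [Function.comp_def] using (K.continuous_of_finiteDimensional.tendsto 0).comp hΔ)
  simp_rw [fun k => varpiF_eq_of_mem_csubdiff (hxS (k + 1)).1 (hxS (k + 1)).2 (hgP.1 _) (hy k)
    (hfin k) (hfP.1 _) (hθF (k + 1))]
  exact (continuous_coe_real_ereal.tendsto _).comp (tendsto_mul_div_of_sub_tendsto_zero hm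
    (fun k => hFm (k + 1)) (hθlim.comp (tendsto_add_atTop_nat 1)) hgap)

theorem stmt12 {n p : ℕ}
    (S : Set (EuclideanSpace ℝ (Fin n)))
    (g : EuclideanSpace ℝ (Fin n) → EReal)
    (h : EuclideanSpace ℝ (Fin n) → ℝ)
    (gh : EuclideanSpace ℝ (Fin n) → EuclideanSpace ℝ (Fin n))
    (f : EuclideanSpace ℝ (Fin p) → EReal)
    (K : EuclideanSpace ℝ (Fin n) →ₗ[ℝ] EuclideanSpace ℝ (Fin p))
    (L δ : ℝ)
    (hS : S.Nonempty) (hSconv : Convex ℝ S) (hScomp : IsCompact S)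
    (hgP : ERealProper g) (hgconv : ERealConvex g) (hglsc : LowerSemicontinuous g)
    (hfP : ERealProper f) (hfconv : ERealConvex f) (hflsc : LowerSemicontinuous f)
    (hL : 0 < L)
    (hhC1 : ∃ O : Set (EuclideanSpace ℝ (Fin n)), IsOpen O ∧ S ⊆ O ∧
      (∀ z ∈ O, HasGradientAt h (gh z) z) ∧
      (∀ z ∈ O, ∀ w ∈ O, ‖gh z - gh w‖ ≤ L * ‖z - w‖))
    (hKS : ∀ z ∈ S, K z ∈ interior (edom f))
    (hfpos : ∀ z ∈ S, (0 : EReal) < f (K z))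
    (hghnn : ∀ z ∈ S, (0 : EReal) ≤ g z + ((h z : ℝ) : EReal))
    (hSg : ∃ z ∈ S, g z ≠ ⊤)
    (hδ : 0 < δ) (hδL : δ < 1 / L)
    (σ : ℝ) (hσ : 0 < σ) (hσ2 : σ < 2)
    (x u : ℕ → EuclideanSpace ℝ (Fin n)) (y : ℕ → EuclideanSpace ℝ (Fin p)) (θ : ℕ → ℝ)
    (hxS : ∀ k, x k ∈ S ∧ g (x k) ≠ ⊤)
    (hy : ∀ k, y (k+1) ∈ csubdiff f (K (x k)))
    (hxmin : ∀ k, ∀ w ∈ S,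
      g (x (k+1)) + (((2*δ)⁻¹ * ‖x (k+1) - u k + δ • gh (x k)
          - (θ k * δ) • (LinearMap.adjoint K) (y (k+1))‖ ^ 2 : ℝ) : EReal)
        ≤ g w + (((2*δ)⁻¹ * ‖w - u k + δ • gh (x k)
          - (θ k * δ) • (LinearMap.adjoint K) (y (k+1))‖ ^ 2 : ℝ) : EReal))
    (hu : ∀ k, u (k+1) = (1 - σ) • u k + σ • x (k+1))
    (hθ : ∀ k, (θ k : EReal) = varthetaF S g h f K δ (x k) (u k))
    (hθnn : ∀ k, 0 ≤ θ k)
    (m M : ℝ) (hm : 0 < m)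
    (hmM : ∀ k, (m : EReal) ≤ f (K (x k)) ∧ f (K (x k)) ≤ (M : EReal))
    (θbar : ℝ) (hθlim : Tendsto θ atTop (𝓝 θbar))
    :
    Tendsto (fun k => varpiF S g h f K δ (x (k+1)) (y (k+1)) (u (k+1))) atTop
      (𝓝 ((θbar : ℝ) : EReal)) :=
  stmt12_general S g h gh f K L δ hSconv hScomp hgP hgconv hfP hfconv hhC1 hKS hδ hδL σ hσ hσ2 x u y
    θ hxS hy hxmin hu hθ hθnn m M hm hmM θbar hθlim
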